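/- arXiv:2101.06967 — 2 statements merged into one kernel-verified Lean document; each statement's English description precedes it below -/
import Mathlib

section
/- Let (Ω, P) be a probability space, let D : Ω → ℝ^D be square-integrable, and let h : Ω → ℝ be square-integrable. Let F : ℝ^D → ℝ^C be globally Lipschitz with constant L and differentiable at x ∈ ℝ^D with derivative J_x. Let S : ℝ × Ω → ℝ^D be measurable in ω and satisfy ‖S(ε, ω) − x − ε D(ω)‖ ≤ ε² h(ω) for all ε and ω. Then lim_{ε → 0} (1/ε²) ∫_Ω ‖F(S(ε, ω)) − F(x)‖² dP(ω) = ∫_Ω ‖J_x D(ω)‖² dP(ω). -/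
open Filter Topology MeasureTheory Asymptotics

/-- Pointwise limit: if `u ε = x + ε • d + O(ε²)` and `F` is differentiable at `x`, then
`(1/ε²) ‖F (u ε) - F x‖² → ‖(fderiv ℝ F x) d‖²` as `ε → 0`, `ε ≠ 0`. -/
lemma ptwise_limit {E E' : Type*} [NormedAddCommGroup E] [NormedSpace ℝ E]
    [NormedAddCommGroup E'] [NormedSpace ℝ E']
    (F : E → E') (x : E) (hF : DifferentiableAt ℝ F x) (d : E) (c : ℝ)
    (u : ℝ → E) (hu : ∀ ε, ‖u ε - x - ε • d‖ ≤ ε ^ 2 * c) :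
    Tendsto (fun ε : ℝ => (1 / ε ^ 2) * ‖F (u ε) - F x‖ ^ 2)
      (𝓝[≠] 0) (𝓝 (‖fderiv ℝ F x d‖ ^ 2)) := by
  set J := fderiv ℝ F x with hJ
  -- u ε → x
  have hA : Tendsto u (𝓝[≠] (0:ℝ)) (𝓝 x) := by
    rw [tendsto_iff_norm_sub_tendsto_zero]
    apply squeeze_zero (g := fun ε => ε ^ 2 * c + |ε| * ‖d‖) (fun ε => norm_nonneg _)
    · intro ε
      calc ‖u ε - x‖ = ‖(u ε - x - ε • d) + ε • d‖ := by abel_nf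
        _ ≤ ‖u ε - x - ε • d‖ + ‖ε • d‖ := norm_add_le _ _
        _ ≤ ε ^ 2 * c + |ε| * ‖d‖ := by
            gcongr
            · exact hu ε
            · rw [norm_smul, Real.norm_eq_abs]
    · have : Continuous (fun ε : ℝ => ε ^ 2 * c + |ε| * ‖d‖) := by continuity
      have h0 := (this.tendsto 0).mono_left (nhdsWithin_le_nhds (s := {(0:ℝ)}ᶜ))
      simpa using h0
  -- remainder is O(ε²)
  have hB : (fun ε : ℝ => u ε - x - ε • d) =O[𝓝[≠] (0:ℝ)] (fun ε => ε ^ 2) := by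
    apply IsBigO.of_bound |c|
    filter_upwards with ε
    calc ‖u ε - x - ε • d‖ ≤ ε ^ 2 * c := hu ε
      _ ≤ ε ^ 2 * |c| := mul_le_mul_of_nonneg_left (le_abs_self c) (by positivity)
      _ = |c| * ‖ε ^ 2‖ := by rw [Real.norm_eq_abs, abs_of_nonneg (sq_nonneg ε)]; ring
  -- ε² = o(ε)
  have hsq : (fun ε : ℝ => ε ^ 2) =o[𝓝[≠] (0:ℝ)] (fun ε => ε) := by
    have : (fun ε : ℝ => ε ^ 2) =o[𝓝 (0:ℝ)] (fun ε => ε) := by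
      rw [isLittleO_iff]
      intro c hc
      filter_upwards [eventually_abs_sub_lt (0:ℝ) hc] with ε hε
      simp only [sub_zero] at hε
      rw [Real.norm_eq_abs, Real.norm_eq_abs, abs_pow, sq]
      exact mul_le_mul_of_nonneg_right hε.le (abs_nonneg _)
    exact this.mono nhdsWithin_le_nhds
  -- u ε - x = O(ε)
  have hC : (fun ε : ℝ => u ε - x) =O[𝓝[≠] (0:ℝ)] (fun ε => ε) := by
    have h1 : (fun ε : ℝ => ε • d) =O[𝓝[≠] (0:ℝ)] (fun ε => ε) := by
      apply IsBigO.of_bound ‖d‖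
      filter_upwards with ε
      rw [norm_smul, mul_comm]
    have := (hB.trans hsq.isBigO).add h1
    simpa using this
  -- first-order expansion
  have hD : (fun ε : ℝ => F (u ε) - F x - J (u ε - x)) =o[𝓝[≠] (0:ℝ)] (fun ε => ε) := by
    have := (hF.hasFDerivAt.isLittleO).comp_tendsto hA
    exact this.trans_isBigO hC
  have hE : (fun ε : ℝ => J (u ε - x) - ε • J d) =o[𝓝[≠] (0:ℝ)] (fun ε => ε) := by
    have h1 : (fun ε : ℝ => J (u ε - x) - ε • J d) = fun ε => J (u ε - x - ε • d) := by
      funext ε; simp only [map_sub, J.map_smul]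
    rw [h1]
    exact ((J.isBigO_comp _ _).trans hB).trans_isLittleO hsq
  have hKey : (fun ε : ℝ => F (u ε) - F x - ε • J d) =o[𝓝[≠] (0:ℝ)] (fun ε => ε) := by
    have := hD.add hE
    simpa using this
  -- norm quotient tends to zero
  have hnorm : Tendsto (fun ε : ℝ => ‖F (u ε) - F x - ε • J d‖ / |ε|) (𝓝[≠] (0:ℝ)) (𝓝 0) := by
    have := hKey.norm_norm.tendsto_div_nhds_zero
    simpa [Real.norm_eq_abs] using this
  -- first-order limit
  have hT : Tendsto (fun ε : ℝ => ε⁻¹ • (F (u ε) - F x)) (𝓝[≠] (0:ℝ)) (𝓝 (J d)) := by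
    rw [tendsto_iff_norm_sub_tendsto_zero]
    apply hnorm.congr'
    filter_upwards [self_mem_nhdsWithin] with ε (hε : ε ≠ 0)
    have : ε⁻¹ • (F (u ε) - F x) - J d = ε⁻¹ • (F (u ε) - F x - ε • J d) := by
      rw [smul_sub ε⁻¹ (F (u ε) - F x) (ε • J d), smul_smul, inv_mul_cancel₀ hε, one_smul]
    rw [this, norm_smul, Real.norm_eq_abs, abs_inv, inv_mul_eq_div]
  -- conclude
  have hfin : Tendsto (fun ε : ℝ => ‖ε⁻¹ • (F (u ε) - F x)‖ ^ 2) (𝓝[≠] (0:ℝ)) (𝓝 (‖J d‖ ^ 2)) :=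
    hT.norm.pow 2
  apply hfin.congr'
  filter_upwards [self_mem_nhdsWithin] with ε (hε : ε ≠ 0)
  rw [norm_smul, Real.norm_eq_abs, mul_pow, sq_abs, inv_pow, one_div]

/-- Stochastic data-augmentation version: for `S (ε, ω) = x + ε D(ω) + O(ε²)` (with an
`L²` control on the remainder), a Lipschitz classifier `F` differentiable at `x` satisfies
`lim_{ε→0} ε⁻² ∫ ‖F(S(ε,ω)) − F(x)‖² dP(ω) = ∫ ‖J_x D(ω)‖² dP(ω)`. -/
theorem expected_consistency_penalty_limit
    (D C : ℕ) {Ω : Type*} [MeasurableSpace Ω]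
    (P : Measure Ω) [IsProbabilityMeasure P]
    (Dmap : Ω → EuclideanSpace ℝ (Fin D)) (hD : MemLp Dmap 2 P)
    (h : Ω → ℝ) (hh : MemLp h 2 P)
    (F : EuclideanSpace ℝ (Fin D) → EuclideanSpace ℝ (Fin C))
    (L : NNReal) (hFLip : LipschitzWith L F)
    (x : EuclideanSpace ℝ (Fin D)) (hF : DifferentiableAt ℝ F x)
    (S : ℝ → Ω → EuclideanSpace ℝ (Fin D))
    (hSmeas : ∀ ε : ℝ, Measurable (S ε))
    (hSbound : ∀ (ε : ℝ) (ω : Ω), ‖S ε ω - x - ε • Dmap ω‖ ≤ ε ^ 2 * h ω) :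
    Tendsto (fun ε : ℝ => (1 / ε ^ 2) * ∫ ω, ‖F (S ε ω) - F x‖ ^ 2 ∂P)
      (𝓝[≠] 0) (𝓝 (∫ ω, ‖fderiv ℝ F x (Dmap ω)‖ ^ 2 ∂P)) := by
  have hmain : Tendsto (fun ε : ℝ => ∫ ω, (1 / ε ^ 2) * ‖F (S ε ω) - F x‖ ^ 2 ∂P)
      (𝓝[≠] 0) (𝓝 (∫ ω, ‖fderiv ℝ F x (Dmap ω)‖ ^ 2 ∂P)) := by
    apply tendsto_integral_filter_of_dominated_convergence
      (bound := fun ω => (L : ℝ) ^ 2 * (‖Dmap ω‖ + |h ω|) ^ 2)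
    · -- measurability
      filter_upwards with ε
      exact (measurable_const.mul
        ((((hFLip.continuous.measurable.comp (hSmeas ε)).sub measurable_const).norm).pow
          measurable_const)).aestronglyMeasurable
    · -- bound
      have h1 : ∀ᶠ ε : ℝ in 𝓝[≠] 0, |ε| ≤ 1 ∧ ε ≠ 0 := by
        have h2 : ∀ᶠ ε : ℝ in 𝓝[≠] 0, |ε| ≤ 1 :=
          ((eventually_abs_sub_lt (0:ℝ) one_pos).mono
            (fun ε hε => by simpa using hε.le)).filter_mono nhdsWithin_le_nhds
        filter_upwards [h2, self_mem_nhdsWithin] with ε hε1 hε2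
        exact ⟨hε1, hε2⟩
      filter_upwards [h1] with ε ⟨hε1, hε0⟩
      apply Eventually.of_forall
      intro ω
      have hh0 : 0 ≤ (1 / ε ^ 2) := by positivity
      have key : ‖F (S ε ω) - F x‖ ≤ (L : ℝ) * (|ε| * (‖Dmap ω‖ + |h ω|)) := by
        calc ‖F (S ε ω) - F x‖ ≤ (L : ℝ) * ‖S ε ω - x‖ := by
              simpa [dist_eq_norm] using hFLip.dist_le_mul (S ε ω) x
          _ ≤ (L : ℝ) * (|ε| * ‖Dmap ω‖ + ε ^ 2 * |h ω|) := by
              gcongr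
              calc ‖S ε ω - x‖ = ‖(S ε ω - x - ε • Dmap ω) + ε • Dmap ω‖ := by abel_nf
                _ ≤ ‖S ε ω - x - ε • Dmap ω‖ + ‖ε • Dmap ω‖ := norm_add_le _ _
                _ ≤ ε ^ 2 * |h ω| + |ε| * ‖Dmap ω‖ := by
                    gcongr
                    · exact (hSbound ε ω).trans
                        (mul_le_mul_of_nonneg_left (le_abs_self _) (by positivity))
                    · rw [norm_smul, Real.norm_eq_abs]
                _ = |ε| * ‖Dmap ω‖ + ε ^ 2 * |h ω| := by ring
          _ ≤ (L : ℝ) * (|ε| * ‖Dmap ω‖ + |ε| * |h ω|) := by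
              gcongr
              calc ε ^ 2 = |ε| ^ 2 := (sq_abs ε).symm
                _ ≤ |ε| := by nlinarith [abs_nonneg ε]
          _ = (L : ℝ) * (|ε| * (‖Dmap ω‖ + |h ω|)) := by ring
      have hnn : (0:ℝ) ≤ ‖Dmap ω‖ + |h ω| := by positivity
      rw [Real.norm_eq_abs, abs_of_nonneg (by positivity)]
      calc (1 / ε ^ 2) * ‖F (S ε ω) - F x‖ ^ 2
          ≤ (1 / ε ^ 2) * ((L : ℝ) * (|ε| * (‖Dmap ω‖ + |h ω|))) ^ 2 := by
            gcongr
        _ = (1 / ε ^ 2) * ε ^ 2 * ((L : ℝ) ^ 2 * (‖Dmap ω‖ + |h ω|) ^ 2) := by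
            rw [mul_pow, mul_pow, sq_abs]; ring
        _ = (L : ℝ) ^ 2 * (‖Dmap ω‖ + |h ω|) ^ 2 := by
            rw [one_div, inv_mul_cancel₀ (pow_ne_zero 2 hε0), one_mul]
    · -- integrability of the bound
      have habs : MemLp (fun ω => |h ω|) 2 P := by
        simpa [Real.norm_eq_abs] using hh.norm
      have hsum : MemLp (fun ω => ‖Dmap ω‖ + |h ω|) 2 P := hD.norm.add habs
      exact hsum.integrable_sq.const_mul _
    · -- a.e. pointwise limit
      apply Eventually.of_forall
      intro ω
      exact ptwise_limit F x hF (Dmap ω) (h ω) (fun ε => S ε ω) (fun ε => hSbound ε ω)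
  have heq : (fun ε : ℝ => ∫ ω, (1 / ε ^ 2) * ‖F (S ε ω) - F x‖ ^ 2 ∂P)
      = fun ε : ℝ => (1 / ε ^ 2) * ∫ ω, ‖F (S ε ω) - F x‖ ^ 2 ∂P := by
    funext ε
    exact integral_const_mul _ _
  rwa [heq] at hmain
end

section
/- Let f : ℝ^d → ℝ be continuously differentiable and globally Lipschitz with constant L, let μ be a probability measure on ℝ^d, and let γ be the standard Gaussian measure on ℝ^d (coordinates independent N(0,1)). Then lim_{ε → 0} (1/ε²) ∫_{ℝ^d} ∫_{ℝ^d} |f(z + ε ω) − f(z)|² γ(dω) μ(dz) = ∫_{ℝ^d} ‖∇f(z)‖² μ(dz). -/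
open Filter Topology MeasureTheory ProbabilityTheory

section auxGauss
open Real


lemma pdf01 (x : ℝ) : gaussianPDFReal 0 1 x = (√(2 * π))⁻¹ * exp (-(2⁻¹ * x ^ 2)) := by
  unfold gaussianPDFReal
  simp only [NNReal.coe_one, mul_one, sub_zero]
  ring_nf

lemma integrable_sq_gauss_kernel : Integrable fun x : ℝ => x ^ 2 * exp (-(2⁻¹ : ℝ) * x ^ 2) := by
  have := integrable_rpow_mul_exp_neg_mul_sq (b := 2⁻¹) (by norm_num) (s := 2) (by norm_num)
  simpa only [show ((2:ℝ)) = ((2:ℕ):ℝ) by norm_num, Real.rpow_natCast] using this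

lemma key_gauss_sq : ∫ x : ℝ, x ^ 2 * exp (-(2⁻¹ * x ^ 2)) = √(2 * π) := by
  have hu : ∀ x : ℝ, HasDerivAt (fun y : ℝ => y) 1 x := fun x => hasDerivAt_id x
  have hv : ∀ x : ℝ, HasDerivAt (fun y : ℝ => -exp (-(2⁻¹ * y ^ 2))) (x * exp (-(2⁻¹ * x ^ 2))) x := by
    intro x
    have h1 : HasDerivAt (fun y : ℝ => -(2⁻¹ * y ^ 2)) (-x) x := by
      exact (((hasDerivAt_pow 2 x)).const_mul (2⁻¹ : ℝ)).neg.congr_deriv (by norm_num; ring)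
    have := (h1.exp).neg
    exact this.congr_deriv (by ring)
  have huv' : Integrable ((fun y : ℝ => y) * fun x => x * exp (-(2⁻¹ * x ^ 2))) := by
    have h : ((fun y : ℝ => y) * fun x => x * exp (-(2⁻¹ * x ^ 2)))
        = fun x : ℝ => x ^ 2 * exp (-(2⁻¹ : ℝ) * x ^ 2) := by
      funext x; simp [Pi.mul_apply]; ring
    rw [h]; exact integrable_sq_gauss_kernel
  have hu'v : Integrable ((fun _ : ℝ => (1:ℝ)) * fun x => -exp (-(2⁻¹ * x ^ 2))) := by
    have h : ((fun _ : ℝ => (1:ℝ)) * fun x => -exp (-(2⁻¹ * x ^ 2)))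
        = fun x : ℝ => -exp (-(2⁻¹:ℝ) * x ^ 2) := by
      funext x; simp [Pi.mul_apply]
    rw [h]; exact (integrable_exp_neg_mul_sq (by norm_num)).neg
  have huv : Integrable ((fun y : ℝ => y) * fun x => -exp (-(2⁻¹ * x ^ 2))) := by
    have h : ((fun y : ℝ => y) * fun x => -exp (-(2⁻¹ * x ^ 2)))
        = fun x : ℝ => -(x * exp (-(2⁻¹:ℝ) * x ^ 2)) := by
      funext x; simp [Pi.mul_apply]
    rw [h]; exact (integrable_mul_exp_neg_mul_sq (by norm_num)).neg
  have := integral_mul_deriv_eq_deriv_mul_of_integrable (fun x _ => hu x) (fun x _ => hv x) huv' hu'v huv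
  have h2 : ∫ x : ℝ, x * (x * exp (-(2⁻¹ * x ^ 2))) = ∫ x : ℝ, x ^ 2 * exp (-(2⁻¹ * x ^ 2)) := by
    congr 1; funext x; ring
  rw [h2] at this
  rw [this]
  have h3 : ∫ x : ℝ, (1:ℝ) * -exp (-(2⁻¹ * x ^ 2)) = -∫ x : ℝ, exp (-(2⁻¹:ℝ) * x ^ 2) := by
    rw [← integral_neg]; congr 1; funext x; ring_nf
  rw [h3, neg_neg, integral_gaussian, show π / 2⁻¹ = 2 * π by ring]

lemma gauss_integral_eq (g : ℝ → ℝ) :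
    ∫ x, g x ∂(gaussianReal 0 1) = ∫ x, gaussianPDFReal 0 1 x * g x := by
  rw [gaussianReal_of_var_ne_zero _ one_ne_zero]
  unfold gaussianPDF
  simp_rw [ENNReal.ofReal]
  rw [integral_withDensity_eq_integral_smul (by exact (measurable_gaussianPDFReal 0 1).real_toNNReal)]
  congr 1
  ext x
  simp [NNReal.smul_def, Real.coe_toNNReal _ (gaussianPDFReal_nonneg 0 1 x)]

lemma gauss_integrable (g : ℝ → ℝ)
    (h : Integrable (fun x => gaussianPDFReal 0 1 x * g x)) :
    Integrable g (gaussianReal 0 1) := by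
  rw [gaussianReal_of_var_ne_zero _ one_ne_zero]
  unfold gaussianPDF
  simp_rw [ENNReal.ofReal]
  refine (integrable_withDensity_iff_integrable_smul (E := ℝ)
    (μ := (volume : Measure ℝ)) (g := g)
    ((measurable_gaussianPDFReal 0 1).real_toNNReal)).mpr ?_
  refine h.congr ?_
  filter_upwards with x
  simp [NNReal.smul_def, Real.coe_toNNReal _ (gaussianPDFReal_nonneg 0 1 x)]

lemma gauss_int_sq : Integrable (fun x : ℝ => x ^ 2) (gaussianReal 0 1) := by
  refine gauss_integrable _ ?_
  have : Integrable (fun x : ℝ => (√(2 * π))⁻¹ * (x ^ 2 * exp (-(2⁻¹:ℝ) * x ^ 2))) :=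
    integrable_sq_gauss_kernel.const_mul _
  refine this.congr ?_
  filter_upwards with x
  rw [pdf01]; ring_nf

lemma gauss_int_id : Integrable (fun x : ℝ => x) (gaussianReal 0 1) := by
  refine gauss_integrable _ ?_
  have : Integrable (fun x : ℝ => (√(2 * π))⁻¹ * (x * exp (-(2⁻¹:ℝ) * x ^ 2))) :=
    (integrable_mul_exp_neg_mul_sq (by norm_num)).const_mul _
  refine this.congr ?_
  filter_upwards with x
  rw [pdf01]; ring_nf

lemma gauss_int_one : Integrable (fun _ : ℝ => (1:ℝ)) (gaussianReal 0 1) :=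
  integrable_const _

lemma gauss_mean : ∫ x, x ∂(gaussianReal 0 1) = 0 := by
  rw [gauss_integral_eq]
  set g : ℝ → ℝ := fun x => gaussianPDFReal 0 1 x * x with hg
  have hodd : ∀ x, g (-x) = -g x := by
    intro x; simp only [hg, pdf01, neg_sq]; ring
  have h : ∫ x, g (-x) = ∫ x, g x :=
    (Measure.measurePreserving_neg (volume : Measure ℝ)).integral_comp
      (MeasurableEquiv.neg ℝ).measurableEmbedding g
  have h2 : ∫ x, g (-x) = -∫ x, g x := by
    simp_rw [hodd]; exact integral_neg g
  linarith [h, h2]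

lemma gauss_var : ∫ x, x ^ 2 ∂(gaussianReal 0 1) = 1 := by
  rw [gauss_integral_eq]
  have h : ∀ x : ℝ, gaussianPDFReal 0 1 x * x ^ 2
      = (√(2 * π))⁻¹ * (x ^ 2 * exp (-(2⁻¹ * x ^ 2))) := by
    intro x; rw [pdf01]; ring_nf
  simp_rw [h]
  rw [integral_const_mul, key_gauss_sq, inv_mul_cancel₀]
  positivity


lemma pi_integral_prod {d : ℕ} (g : Fin d → ℝ → ℝ) :
    ∫ x : Fin d → ℝ, ∏ i, g i (x i) ∂(Measure.pi fun _ => gaussianReal 0 1)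
      = ∏ i, ∫ t, g i t ∂(gaussianReal 0 1) := by
  letI : MeasureSpace ℝ := ⟨gaussianReal 0 1⟩
  haveI : IsProbabilityMeasure (volume : Measure ℝ) :=
    (inferInstance : IsProbabilityMeasure (gaussianReal 0 1))
  exact integral_fintype_prod_eq_prod g

lemma pi_integrable_prod {d : ℕ} (g : Fin d → ℝ → ℝ)
    (hg : ∀ i, Integrable (g i) (gaussianReal 0 1)) :
    Integrable (fun x : Fin d → ℝ => ∏ i, g i (x i))
      (Measure.pi fun _ => gaussianReal 0 1) := by
  letI : MeasureSpace ℝ := ⟨gaussianReal 0 1⟩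
  haveI : IsProbabilityMeasure (volume : Measure ℝ) :=
    (inferInstance : IsProbabilityMeasure (gaussianReal 0 1))
  exact Integrable.fintype_prod hg



section
variable {d : ℕ} (i j : Fin d)

private def gk (i j k : Fin d) : ℝ → ℝ :=
  fun t => (if k = i then t else 1) * (if k = j then t else 1)

lemma gk_prod (x : Fin d → ℝ) : ∏ k, gk i j k (x k) = x i * x j := by
  unfold gk
  rw [Finset.prod_mul_distrib, Finset.prod_ite_eq' Finset.univ i (fun k => x k),
    Finset.prod_ite_eq' Finset.univ j (fun k => x k)]
  simp

lemma gk_integrable (k : Fin d) : Integrable (gk i j k) (gaussianReal 0 1) := by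
  unfold gk
  split_ifs
  · exact gauss_int_sq.congr (by filter_upwards with t; ring)
  · exact gauss_int_id.congr (by filter_upwards with t; ring)
  · exact gauss_int_id.congr (by filter_upwards with t; ring)
  · exact (integrable_const (1:ℝ)).congr (by filter_upwards with t; ring)

lemma gk_integral (k : Fin d) : ∫ t, gk i j k t ∂(gaussianReal 0 1)
    = if k = i then (if k = j then 1 else 0) else (if k = j then 0 else 1) := by
  unfold gk
  split_ifs
  · simpa [pow_two] using gauss_var
  · simpa using gauss_mean
  · simpa using gauss_mean
  · simp

lemma pi_cov : ∫ x : Fin d → ℝ, x i * x j ∂(Measure.pi fun _ => gaussianReal 0 1)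
    = if i = j then 1 else 0 := by
  have h1 : (fun x : Fin d → ℝ => x i * x j) = fun x => ∏ k, gk i j k (x k) := by
    funext x; rw [gk_prod]
  rw [h1, pi_integral_prod]
  simp_rw [gk_integral]
  rcases eq_or_ne i j with h | h
  · subst h
    rw [if_pos rfl]
    refine Finset.prod_eq_one fun k _ => ?_
    by_cases hk : k = i <;> simp [hk]
  · rw [if_neg h]
    refine Finset.prod_eq_zero (Finset.mem_univ i) ?_
    simp [h]

lemma pi_cov_integrable :
    Integrable (fun x : Fin d → ℝ => x i * x j) (Measure.pi fun _ => gaussianReal 0 1) := by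
  have h1 : (fun x : Fin d → ℝ => x i * x j) = fun x => ∏ k, gk i j k (x k) := by
    funext x; rw [gk_prod]
  rw [h1]
  exact pi_integrable_prod _ (gk_integrable i j)

lemma pi_sq_integrable :
    Integrable (fun x : Fin d → ℝ => (x i) ^ 2) (Measure.pi fun _ => gaussianReal 0 1) :=
  (pi_cov_integrable i i).congr (by filter_upwards with x; ring)

lemma pi_sq_integral : ∫ x : Fin d → ℝ, (x i) ^ 2 ∂(Measure.pi fun _ => gaussianReal 0 1) = 1 := by
  rw [show (fun x : Fin d → ℝ => (x i) ^ 2) = fun x => x i * x i from by funext x; ring]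
  rw [pi_cov i i, if_pos rfl]
end



section
variable {d : ℕ}

local notation "E" => EuclideanSpace ℝ (Fin d)
local notation "ν" => (Measure.pi fun _ : Fin d => gaussianReal 0 1)

noncomputable def γd (d : ℕ) : Measure (EuclideanSpace ℝ (Fin d)) :=
  (Measure.pi fun _ : Fin d => gaussianReal 0 1).map
    (EuclideanSpace.equiv (Fin d) ℝ).symm

lemma esymm_me : MeasurableEmbedding
    ((EuclideanSpace.equiv (Fin d) ℝ).symm : (Fin d → ℝ) → E) :=
  (EuclideanSpace.equiv (Fin d) ℝ).symm.toHomeomorph.measurableEmbedding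

lemma γ_integral (g : E → ℝ) :
    ∫ ω, g ω ∂(γd d) = ∫ x : Fin d → ℝ, g ((EuclideanSpace.equiv (Fin d) ℝ).symm x) ∂ν :=
  esymm_me.integral_map g

lemma γ_integrable_iff (g : E → ℝ) :
    Integrable g (γd d) ↔
      Integrable (fun x : Fin d → ℝ => g ((EuclideanSpace.equiv (Fin d) ℝ).symm x)) ν :=
  esymm_me.integrable_map_iff

lemma γ_inner_sq (v : E) : ∫ ω, (inner ℝ v ω : ℝ) ^ 2 ∂(γd d) = ‖v‖ ^ 2 := by
  rw [γ_integral]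
  have h1 : ∀ x : Fin d → ℝ,
      (inner ℝ v ((EuclideanSpace.equiv (Fin d) ℝ).symm x) : ℝ) ^ 2
      = ∑ i, ∑ j, (v i * v j) * (x i * x j) := by
    intro x
    rw [PiLp.inner_apply]
    simp only [RCLike.inner_apply, conj_trivial]
    rw [pow_two, Finset.sum_mul_sum]
    congr 1; funext i; congr 1; funext j
    show x i * v i * (x j * v j) = _
    ring
  simp_rw [h1]
  rw [integral_finset_sum _ (fun i _ => integrable_finset_sum _ (fun j _ =>
    ((pi_cov_integrable i j).const_mul _)))]
  have h2 : ∀ i : Fin d, ∫ x : Fin d → ℝ, ∑ j, (v i * v j) * (x i * x j) ∂ν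
      = v i * v i := by
    intro i
    rw [integral_finset_sum _ (fun j _ => ((pi_cov_integrable i j).const_mul _))]
    have : ∀ j : Fin d, ∫ x : Fin d → ℝ, (v i * v j) * (x i * x j) ∂ν
        = (v i * v j) * if i = j then 1 else 0 := by
      intro j; rw [integral_const_mul, pi_cov]
    simp_rw [this]
    simp [mul_ite, Finset.sum_ite_eq]
  simp_rw [h2]
  rw [← real_inner_self_eq_norm_sq, PiLp.inner_apply]
  simp [pow_two]

lemma γ_norm_sq_integrable : Integrable (fun ω : E => ‖ω‖ ^ 2) (γd d) := by
  rw [γ_integrable_iff]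
  have h : ∀ x : Fin d → ℝ,
      ‖(EuclideanSpace.equiv (Fin d) ℝ).symm x‖ ^ 2 = ∑ i, (x i) ^ 2 := by
    intro x
    rw [EuclideanSpace.norm_eq, Real.sq_sqrt (by positivity)]
    congr 1; funext i
    rw [Real.norm_eq_abs, sq_abs]
    rfl
  simp_rw [h]
  exact integrable_finset_sum _ (fun i _ => pi_sq_integrable i)
end


section main
variable {d : ℕ}
local notation "E" => EuclideanSpace ℝ (Fin d)


lemma grad_apply (f : E → ℝ) (z ω : E) :
    (fderiv ℝ f z) ω = (inner ℝ (gradient f z) ω : ℝ) := by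
  rw [gradient, ← InnerProductSpace.toDual_apply_apply, LinearIsometryEquiv.apply_symm_apply]

lemma slope_sq_tendsto (f : E → ℝ) (hf : ContDiff ℝ 1 f) (z ω : E) :
    Tendsto (fun ε : ℝ => (1/ε^2) * |f (z + ε • ω) - f z|^2) (𝓝[≠] 0)
      (𝓝 ((inner ℝ (gradient f z) ω : ℝ)^2)) := by
  have hφ : HasDerivAt (fun ε : ℝ => z + ε • ω) ω 0 := by
    simpa using ((hasDerivAt_id (0:ℝ)).smul_const ω).const_add z
  have hfd : HasFDerivAt f (fderiv ℝ f z) ((fun ε : ℝ => z + ε • ω) 0) := by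
    simpa using (hf.differentiable one_ne_zero z).hasFDerivAt
  have hd : HasDerivAt (fun ε : ℝ => f (z + ε • ω)) ((fderiv ℝ f z) ω) 0 :=
    hfd.comp_hasDerivAt 0 hφ
  rw [hasDerivAt_iff_tendsto_slope] at hd
  have h2 := hd.pow 2
  rw [grad_apply f z ω] at h2
  refine h2.congr' ?_
  filter_upwards [self_mem_nhdsWithin] with ε (hε : ε ≠ 0)
  rw [slope_def_field]
  simp only [sub_zero]
  rw [div_pow, sq_abs]
  field_simp
  simp

lemma lip_bound (f : E → ℝ) (L : NNReal) (hfLip : LipschitzWith L f)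
    {ε : ℝ} (hε : ε ≠ 0) (z ω : E) :
    (1/ε^2) * |f (z + ε • ω) - f z|^2 ≤ (L:ℝ)^2 * ‖ω‖^2 := by
  have h1 : |f (z + ε • ω) - f z| ≤ (L:ℝ) * (|ε| * ‖ω‖) := by
    have := hfLip.dist_le_mul (z + ε • ω) z
    rwa [Real.dist_eq, dist_eq_norm, add_sub_cancel_left, norm_smul,
      Real.norm_eq_abs] at this
  have h2 : |f (z + ε • ω) - f z|^2 ≤ ((L:ℝ) * (|ε| * ‖ω‖))^2 :=
    pow_le_pow_left₀ (abs_nonneg _) h1 2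
  have h3 : (1/ε^2) * |f (z + ε • ω) - f z|^2 ≤ (1/ε^2) * ((L:ℝ) * (|ε| * ‖ω‖))^2 :=
    mul_le_mul_of_nonneg_left h2 (by positivity)
  refine h3.trans_eq ?_
  rw [mul_pow, mul_pow, sq_abs]
  field_simp

lemma stepA (f : E → ℝ) (hf : ContDiff ℝ 1 f) (L : NNReal) (hfLip : LipschitzWith L f)
    (γ : Measure E) [IsProbabilityMeasure γ]
    (hvar : ∀ v : E, ∫ ω, (inner ℝ v ω : ℝ) ^ 2 ∂γ = ‖v‖ ^ 2)
    (hnorm : Integrable (fun ω : E => ‖ω‖ ^ 2) γ) (z : E) :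
    Tendsto (fun ε : ℝ => ∫ ω, (1/ε^2) * |f (z + ε • ω) - f z|^2 ∂γ) (𝓝[≠] 0)
      (𝓝 (‖gradient f z‖ ^ 2)) := by
  rw [← hvar (gradient f z)]
  refine tendsto_integral_filter_of_dominated_convergence
    (fun ω => (L:ℝ)^2 * ‖ω‖^2) ?_ ?_ (hnorm.const_mul _) ?_
  · filter_upwards with ε
    have hc : Continuous (fun ω : E => (1/ε^2) * |f (z + ε • ω) - f z|^2) := by
      have : Continuous fun ω : E => f (z + ε • ω) - f z :=
        (hf.continuous.comp (continuous_const.add (continuous_id.const_smul ε))).sub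
          continuous_const
      exact continuous_const.mul ((this.abs).pow 2)
    exact hc.aestronglyMeasurable
  · filter_upwards [self_mem_nhdsWithin] with ε (hε : ε ≠ 0)
    filter_upwards with ω
    rw [Real.norm_of_nonneg (by positivity)]
    exact lip_bound f L hfLip hε z ω
  · filter_upwards with ω
    exact slope_sq_tendsto f hf z ω

/-- Passage from the rescaled consistency penalty to the Dirichlet-type energy: for a
`C¹`, globally Lipschitz `f : ℝ^d → ℝ`, a probability measure `μ` on `ℝ^d` and the
standard Gaussian measure `γ` on `ℝ^d`,
`lim_{ε→0} ε⁻² ∫∫ |f(z + εω) − f(z)|² γ(dω) μ(dz) = ∫ ‖∇f(z)‖² μ(dz)`. -/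
theorem consistency_penalty_limit_dirichlet_energy
    (d : ℕ) (f : EuclideanSpace ℝ (Fin d) → ℝ)
    (hf : ContDiff ℝ 1 f) (L : NNReal) (hfLip : LipschitzWith L f)
    (μ : Measure (EuclideanSpace ℝ (Fin d))) [IsProbabilityMeasure μ]
    (γ : Measure (EuclideanSpace ℝ (Fin d)))
    (hγ : γ = (Measure.pi fun _ : Fin d => gaussianReal 0 1).map
      (EuclideanSpace.equiv (Fin d) ℝ).symm) :
    Tendsto
      (fun ε : ℝ => (1 / ε ^ 2) * ∫ z, (∫ ω, |f (z + ε • ω) - f z| ^ 2 ∂γ) ∂μ)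
      (𝓝[≠] 0) (𝓝 (∫ z, ‖gradient f z‖ ^ 2 ∂μ)) := by
  haveI : IsProbabilityMeasure γ := by
    rw [hγ]
    exact Measure.isProbabilityMeasure_map
      ((EuclideanSpace.equiv (Fin d) ℝ).symm.toHomeomorph.measurable).aemeasurable
  have hγd : γ = γd d := hγ
  have hvar : ∀ v : EuclideanSpace ℝ (Fin d), ∫ ω, (inner ℝ v ω : ℝ) ^ 2 ∂γ = ‖v‖ ^ 2 := by
    rw [hγd]; exact fun v => γ_inner_sq v
  have hnorm : Integrable (fun ω : EuclideanSpace ℝ (Fin d) => ‖ω‖ ^ 2) γ := by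
    rw [hγd]; exact γ_norm_sq_integrable
  -- rewrite: pull the constant inside both integrals
  have hfun : ∀ ε : ℝ, (1 / ε ^ 2) * ∫ z, (∫ ω, |f (z + ε • ω) - f z| ^ 2 ∂γ) ∂μ
      = ∫ z, (∫ ω, (1 / ε ^ 2) * |f (z + ε • ω) - f z| ^ 2 ∂γ) ∂μ := by
    intro ε
    rw [← integral_const_mul]
    congr 1
    funext z
    rw [← integral_const_mul]
  simp_rw [hfun]
  set C : ℝ := ∫ ω, ‖ω‖ ^ 2 ∂γ with hC
  refine tendsto_integral_filter_of_dominated_convergence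
    (fun _ => (L:ℝ)^2 * C) ?_ ?_ (integrable_const _) ?_
  · -- a.e. strong measurability of z ↦ inner integral
    filter_upwards with ε
    have hcont : Continuous (fun p : EuclideanSpace ℝ (Fin d) × EuclideanSpace ℝ (Fin d) =>
        (1 / ε ^ 2) * |f (p.1 + ε • p.2) - f p.1| ^ 2) := by
      have : Continuous fun p : EuclideanSpace ℝ (Fin d) × EuclideanSpace ℝ (Fin d) =>
          f (p.1 + ε • p.2) - f p.1 :=
        (hf.continuous.comp (continuous_fst.add (continuous_snd.const_smul ε))).sub
          (hf.continuous.comp continuous_fst)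
      exact continuous_const.mul ((this.abs).pow 2)
    exact (hcont.stronglyMeasurable.integral_prod_right').aestronglyMeasurable
  · -- uniform bound
    filter_upwards [self_mem_nhdsWithin] with ε (hε : ε ≠ 0)
    filter_upwards with z
    have h0 : 0 ≤ ∫ ω, (1 / ε ^ 2) * |f (z + ε • ω) - f z| ^ 2 ∂γ :=
      integral_nonneg fun ω => by positivity
    rw [Real.norm_of_nonneg h0]
    have hle : ∫ ω, (1 / ε ^ 2) * |f (z + ε • ω) - f z| ^ 2 ∂γ
        ≤ ∫ ω, (L:ℝ)^2 * ‖ω‖^2 ∂γ := by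
      refine integral_mono_of_nonneg (by filter_upwards with ω; positivity)
        (hnorm.const_mul _) ?_
      filter_upwards with ω
      exact lip_bound f L hfLip hε z ω
    exact hle.trans_eq (by rw [integral_const_mul])
  · filter_upwards with z
    exact stepA f hf L hfLip γ hvar hnorm z
end main

end auxGauss
end
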